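/- Let d ≥ 1 be an integer and c ∈ ℝ with 1 + d·c > 0. Then for every measurable function g : ℝ^d → [0,∞], ∫_{ℝ^d} g(λ)·f_c(λ) dλ = ((2π)^{d/2}/K_d) · ∫_{ℝ^d} g(λ)·Δ(λ)·𝟙_O(λ)·ψ_{c;d}(λ) dλ, where ψ_{c;d} is the density of the centered Gaussian measure on ℝ^d with covariance matrix Θ_{c;d} := I_d + c·𝟏𝟏^⊤, i.e. ψ_{c;d}(x) = (2π)^{−d/2}(1+dc)^{−1/2}·exp(−x^⊤Θ_{c;d}^{−1}x/2). (Lemma 4.3: change of variables turning a GOI expectation into a Gaussian expectation.) -/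

import Mathlib

open MeasureTheory Filter Real

/-- `K_d := 2^{d/2} ∏_{j=1}^d Γ(j/2)`. -/
noncomputable def Kd (d : ℕ) : ℝ :=
  2 ^ ((d : ℝ) / 2) * ∏ j ∈ Finset.Icc 1 d, Real.Gamma ((j : ℝ) / 2)

/-- `Π(λ) := ∏_{j=1}^d |λ_j|`. -/
noncomputable def PiAbs (d : ℕ) (lam : Fin d → ℝ) : ℝ := ∏ j, |lam j|

/-- `Δ(λ) := ∏_{1 ≤ h < k ≤ d} |λ_h − λ_k|`. -/
noncomputable def DeltaV (d : ℕ) (lam : Fin d → ℝ) : ℝ :=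
  ∏ h : Fin d, ∏ k : Fin d, if h < k then |lam h - lam k| else 1

/-- The density of the ordered eigenvalues of a GOI(c) matrix. -/
noncomputable def fGOI (d : ℕ) (c : ℝ) (lam : Fin d → ℝ) : ℝ :=
  (Kd d * Real.sqrt (1 + d * c))⁻¹ * DeltaV d lam *
    Real.exp (-(∑ j, lam j ^ 2) / 2 + c * (∑ j, lam j) ^ 2 / (2 * (1 + d * c))) *
    Set.indicator {x : Fin d → ℝ | Monotone x} (fun _ => 1) lam


/-- `Θ_{c;d} := I_d + c·𝟏𝟏^⊤`. -/
noncomputable def ThetaM (d : ℕ) (c : ℝ) : Matrix (Fin d) (Fin d) ℝ :=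
  1 + c • Matrix.of (fun _ _ => (1 : ℝ))

/-- The density of the centered Gaussian measure on `ℝ^d` with covariance `Θ_{c;d}`:
`ψ_{c;d}(x) = (2π)^{−d/2}(1+dc)^{−1/2}·exp(−xᵀΘ_{c;d}⁻¹x/2)`. -/
noncomputable def psiG (d : ℕ) (c : ℝ) (x : Fin d → ℝ) : ℝ :=
  (2 * π) ^ (-(d : ℝ) / 2) * (1 + d * c) ^ (-(1 : ℝ) / 2) *
    Real.exp (-(dotProduct x ((ThetaM d c)⁻¹.mulVec x)) / 2)

/- The identity holds pointwise: by the Sherman–Morrison formula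
`Θ⁻¹ = I - c/(1+dc) · 𝟏𝟏ᵀ`, so `xᵀΘ⁻¹x = ‖x‖² - c(∑ xᵢ)²/(1+dc)` and the exponent of `ψ` is
exactly the exponent of `f_c`; the normalising constants then match. -/

lemma ThetaM_inv (d : ℕ) (c : ℝ) (hc : 1 + (d : ℝ) * c ≠ 0) :
    (ThetaM d c)⁻¹ = 1 - (c / (1 + d * c)) • Matrix.of (fun _ _ => (1 : ℝ)) := by
  rw [ThetaM]
  set J : Matrix (Fin d) (Fin d) ℝ := Matrix.of fun _ _ => 1
  set a := c / (1 + d * c)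
  have hJ : J * J = (d : ℝ) • J := by
    ext; simp [J, Matrix.mul_apply]
  have hcoef : c - a - c * a * d = 0 := by
    linear_combination -div_mul_cancel₀ c hc
  apply Matrix.inv_eq_right_inv
  calc (1 + c • J) * (1 - a • J) = 1 + (c - a - c * a * d) • J := by
        simp only [mul_sub, add_mul, one_mul, mul_one, smul_mul_smul_comm, hJ, smul_smul]
        module
    _ = 1 := by rw [hcoef, zero_smul, add_zero]

lemma dotProduct_ThetaM_inv_mulVec (d : ℕ) (c : ℝ) (hc : 1 + (d : ℝ) * c ≠ 0)
    (x : Fin d → ℝ) :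
    dotProduct x ((ThetaM d c)⁻¹.mulVec x) =
      ∑ j, x j ^ 2 - c / (1 + d * c) * (∑ j, x j) ^ 2 := by
  rw [ThetaM_inv d c hc, Matrix.sub_mulVec, Matrix.one_mulVec, dotProduct_sub,
    Matrix.smul_mulVec, dotProduct_smul, smul_eq_mul]
  congr 1
  · simp only [dotProduct, sq]
  · simp only [dotProduct, Matrix.mulVec, Matrix.of_apply, one_mul, sq, Finset.sum_mul]

lemma Kd_pos (d : ℕ) : 0 < Kd d := by
  refine mul_pos (rpow_pos_of_pos two_pos _) (Finset.prod_pos fun j hj => ?_)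
  have hj : (0 : ℝ) < j := by exact_mod_cast (Finset.mem_Icc.mp hj).1
  exact Gamma_pos_of_pos (by positivity)

lemma fGOI_eq_const_mul (d : ℕ) (c : ℝ) (hc : 0 < 1 + (d : ℝ) * c) (lam : Fin d → ℝ) :
    fGOI d c lam = (2 * π) ^ ((d : ℝ) / 2) / Kd d *
      (DeltaV d lam * Set.indicator {x : Fin d → ℝ | Monotone x} (fun _ => 1) lam *
        psiG d c lam) := by
  have hexp : -(∑ j, lam j ^ 2 - c / (1 + d * c) * (∑ j, lam j) ^ 2) / 2
      = -(∑ j, lam j ^ 2) / 2 + c * (∑ j, lam j) ^ 2 / (2 * (1 + d * c)) := by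
    field_simp
    ring
  have hpow : (2 * π) ^ (-(d : ℝ) / 2) = ((2 * π) ^ ((d : ℝ) / 2))⁻¹ := by
    rw [neg_div, rpow_neg (by positivity)]
  have hsqrt : (1 + d * c) ^ (-(1 : ℝ) / 2) = (√(1 + d * c))⁻¹ := by
    rw [sqrt_eq_rpow, ← rpow_neg hc.le, neg_div]
  have := Kd_pos d
  rw [fGOI, psiG, dotProduct_ThetaM_inv_mulVec d c hc.ne', hexp, hpow, hsqrt]
  field_simp

theorem statement7_general (d : ℕ) (c : ℝ) (hc : 0 < 1 + (d : ℝ) * c)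
    (g : (Fin d → ℝ) → ENNReal) :
    ∫⁻ lam : Fin d → ℝ, g lam * ENNReal.ofReal (fGOI d c lam) =
      ENNReal.ofReal ((2 * π) ^ ((d : ℝ) / 2) / Kd d) *
        ∫⁻ lam : Fin d → ℝ, g lam * ENNReal.ofReal (DeltaV d lam *
          Set.indicator {x : Fin d → ℝ | Monotone x} (fun _ => 1) lam * psiG d c lam) := by
  have hconst : 0 ≤ (2 * π) ^ ((d : ℝ) / 2) / Kd d := by
    have := Kd_pos d
    positivity
  rw [← lintegral_const_mul' _ _ ENNReal.ofReal_ne_top]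
  refine lintegral_congr fun lam => ?_
  rw [fGOI_eq_const_mul d c hc lam, ENNReal.ofReal_mul hconst]
  ring

/-- Lemma 4.3: change of variables turning a GOI expectation into a Gaussian expectation. -/
theorem statement7 (d : ℕ) (hd : 1 ≤ d) (c : ℝ) (hc : 0 < 1 + (d : ℝ) * c)
    (g : (Fin d → ℝ) → ENNReal) (hg : Measurable g) :
    ∫⁻ lam : Fin d → ℝ, g lam * ENNReal.ofReal (fGOI d c lam) =
      ENNReal.ofReal ((2 * π) ^ ((d : ℝ) / 2) / Kd d) *
        ∫⁻ lam : Fin d → ℝ, g lam * ENNReal.ofReal (DeltaV d lam *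
          Set.indicator {x : Fin d → ℝ | Monotone x} (fun _ => 1) lam * psiG d c lam) :=
  statement7_general d c hc g
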